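/- Quadrangle condition at the origin: Let X ∈ V with h(X) = m+1 (m ≥ 1), and let Y, Z ∈ V be adjacent to X with h(Y) = h(Z) = m. Then there exists W ∈ V adjacent to both Y and Z with h(W) = m − 1. -/

import Mathlib

/-! An edge vector takes only two values `c` and `c + (n + 1)`, so adding it to `X` lowers the
spread `max - min` by at most `n + 1`, and by exactly `n + 1` only if it is minimal on the
maximal coordinates of `X` and maximal on the minimal ones. Both `Y - X` and `Z - X` are of this
kind. Raising the minimal coordinates of `X` by `2 (n + 1)` and the intermediate ones by `n + 1`
gives a vertex `W` whose difference with any such neighbour is again two-valued, hence an edge,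
and whose spread is that of `X` minus `2 (n + 1)`; this needs `m ≥ 1`, i.e. spread at least
`2 (n + 1)`, so that the intermediate coordinates stay between the new extremes. -/

open Finset

/-- The vertex set of the 1-skeleton of the Ã_n Coxeter complex:
integer vectors summing to zero with all pairwise coordinate differences divisible by n+1. -/
def inV (n : ℕ) (x : Fin (n+1) → ℤ) : Prop :=
  (∑ i, x i = 0) ∧ ∀ i j, ((n : ℤ) + 1) ∣ x i - x j

/-- Maximum coordinate. -/
def maxC (n : ℕ) (x : Fin (n+1) → ℤ) : ℤ := univ.sup' univ_nonempty x

/-- Minimum coordinate. -/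
def minC (n : ℕ) (x : Fin (n+1) → ℤ) : ℤ := univ.inf' univ_nonempty x

/-- An edge vector: coordinates sum to 0, pairwise differences divisible by n+1,
and max minus min equals n+1. -/
def isEdge (n : ℕ) (e : Fin (n+1) → ℤ) : Prop :=
  inV n e ∧ maxC n e - minC n e = (n : ℤ) + 1

/-- Height of a vertex: (max − min)/(n+1). -/
def height (n : ℕ) (x : Fin (n+1) → ℤ) : ℤ :=
  (maxC n x - minC n x) / ((n : ℤ) + 1)

/-- The edge vector associated to a subset S: value n+1−|S| on S and −|S| off S. -/
def eVec (n : ℕ) (S : Finset (Fin (n+1))) : Fin (n+1) → ℤ :=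
  fun i => if i ∈ S then (n : ℤ) + 1 - S.card else -(S.card : ℤ)

lemma inV_zero (n : ℕ) : inV n 0 := ⟨by simp, fun i j => by simp⟩

lemma maxC_neg (n : ℕ) (x : Fin (n+1) → ℤ) : maxC n (-x) = - minC n x := by
  unfold maxC minC
  apply le_antisymm
  · apply Finset.sup'_le
    intro i hi
    have h1 : univ.inf' univ_nonempty x ≤ x i := Finset.inf'_le _ hi
    have h2 : (-x) i = -(x i) := rfl
    omega
  · obtain ⟨i, hi, h⟩ := Finset.exists_mem_eq_inf' (univ_nonempty) x
    rw [h]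
    have h1 : (-x) i ≤ univ.sup' univ_nonempty (-x) := Finset.le_sup' (-x) hi
    have h2 : (-x) i = -(x i) := rfl
    omega

lemma minC_neg (n : ℕ) (x : Fin (n+1) → ℤ) : minC n (-x) = - maxC n x := by
  have := maxC_neg n (-x)
  rw [neg_neg] at this
  unfold maxC minC at *
  omega

lemma isEdge_neg {n : ℕ} {e : Fin (n+1) → ℤ} (h : isEdge n e) : isEdge n (-e) := by
  obtain ⟨⟨h1, h2⟩, h3⟩ := h
  refine ⟨⟨by simp [h1], fun i j => by
    have h' : (-e) i - (-e) j = e j - e i := by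
      simp only [Pi.neg_apply]; ring
    rw [h']; exact h2 j i⟩, ?_⟩
  rw [maxC_neg, minC_neg]
  omega

/-- The graph G on V with edge-vector adjacency. -/
def G (n : ℕ) : SimpleGraph {x : Fin (n+1) → ℤ // inV n x} where
  Adj x y := isEdge n (y.1 - x.1)
  symm := by
    constructor
    intro x y h
    have := isEdge_neg h
    rwa [neg_sub] at this
  loopless := by
    constructor
    intro x h
    obtain ⟨-, h3⟩ := h
    rw [sub_self] at h3
    simp [maxC, minC] at h3
    omega

section Quadrangle

variable {n : ℕ}

lemma minC_le (x : Fin (n+1) → ℤ) (i : Fin (n+1)) : minC n x ≤ x i :=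
  inf'_le _ (mem_univ i)

lemma le_maxC (x : Fin (n+1) → ℤ) (i : Fin (n+1)) : x i ≤ maxC n x :=
  le_sup' _ (mem_univ i)

lemma exists_eq_maxC (x : Fin (n+1) → ℤ) : ∃ i, x i = maxC n x := by
  obtain ⟨i, -, h⟩ := exists_mem_eq_sup' univ_nonempty x
  exact ⟨i, h.symm⟩

lemma exists_eq_minC (x : Fin (n+1) → ℤ) : ∃ i, x i = minC n x := by
  obtain ⟨i, -, h⟩ := exists_mem_eq_inf' univ_nonempty x
  exact ⟨i, h.symm⟩

lemma maxC_eq_of_forall_le {x : Fin (n+1) → ℤ} {b : ℤ} (hle : ∀ i, x i ≤ b) (i : Fin (n+1))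
    (hi : x i = b) : maxC n x = b :=
  le_antisymm (sup'_le _ _ fun j _ => hle j) (hi ▸ le_maxC x i)

lemma minC_eq_of_forall_le {x : Fin (n+1) → ℤ} {b : ℤ} (hle : ∀ i, b ≤ x i) (i : Fin (n+1))
    (hi : x i = b) : minC n x = b :=
  le_antisymm (hi ▸ minC_le x i) (le_inf' _ _ fun j _ => hle j)

def spread (n : ℕ) (x : Fin (n+1) → ℤ) : ℤ := maxC n x - minC n x

lemma spread_nonneg (x : Fin (n+1) → ℤ) : 0 ≤ spread n x := by
  have := minC_le x 0
  have := le_maxC x 0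
  unfold spread
  omega

lemma inV_add {x y : Fin (n+1) → ℤ} (hx : inV n x) (hy : inV n y) : inV n (x + y) := by
  refine ⟨by simp [sum_add_distrib, hx.1, hy.1], fun i j => ?_⟩
  have h : (x + y) i - (x + y) j = (x i - x j) + (y i - y j) := by simp only [Pi.add_apply]; ring
  exact h ▸ dvd_add (hx.2 i j) (hy.2 i j)

lemma inV_sub {x y : Fin (n+1) → ℤ} (hx : inV n x) (hy : inV n y) : inV n (x - y) := by
  refine ⟨by simp [sum_sub_distrib, hx.1, hy.1], fun i j => ?_⟩
  have h : (x - y) i - (x - y) j = (x i - x j) - (y i - y j) := by simp only [Pi.sub_apply]; ring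
  exact h ▸ dvd_sub (hx.2 i j) (hy.2 i j)

lemma eVec_apply (S : Finset (Fin (n+1))) (i : Fin (n+1)) :
    eVec n S i = (n + 1 : ℤ) * (if i ∈ S then 1 else 0) - #S := by
  unfold eVec
  split_ifs <;> ring

lemma inV_eVec (S : Finset (Fin (n+1))) : inV n (eVec n S) := by
  refine ⟨?_, fun i j => ⟨(if i ∈ S then 1 else 0) - (if j ∈ S then 1 else 0), ?_⟩⟩
  · simp only [eVec_apply, sum_sub_distrib, ← mul_sum, sum_boole, filter_mem_eq_inter,
      univ_inter, sum_const, card_univ, Fintype.card_fin]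
    ring
  · rw [eVec_apply, eVec_apply]
    ring

lemma spread_eq_height_mul {x : Fin (n+1) → ℤ} (hx : inV n x) :
    spread n x = height n x * (n + 1) := by
  obtain ⟨i, hi⟩ := exists_eq_maxC x
  obtain ⟨j, hj⟩ := exists_eq_minC x
  have hdvd : (n + 1 : ℤ) ∣ spread n x := by
    rw [spread, ← hi, ← hj]
    exact hx.2 i j
  exact (Int.ediv_mul_cancel hdvd).symm

lemma height_eq_of_spread_eq {x : Fin (n+1) → ℤ} {k : ℤ} (h : spread n x = k * (n + 1)) :
    height n x = k := by
  change spread n x / (n + 1) = k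
  rw [h]
  exact Int.mul_ediv_cancel _ (by positivity)

lemma inV.eq_maxC_or_eq_minC_or_between {x : Fin (n+1) → ℤ} (hx : inV n x) (i : Fin (n+1)) :
    x i = maxC n x ∨ x i = minC n x ∨
      (minC n x + (n + 1) ≤ x i ∧ x i + (n + 1) ≤ maxC n x) := by
  obtain ⟨i₀, hi₀⟩ := exists_eq_maxC x
  obtain ⟨j₀, hj₀⟩ := exists_eq_minC x
  by_cases hmax : x i = maxC n x
  · exact Or.inl hmax
  by_cases hmin : x i = minC n x
  · exact Or.inr (Or.inl hmin)
  have hN : (0 : ℤ) < n + 1 := by positivity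
  have habove : (n + 1 : ℤ) ≤ x i - minC n x :=
    Int.le_of_dvd (by have := minC_le x i; omega) (hj₀ ▸ hx.2 i j₀)
  have hbelow : (n + 1 : ℤ) ≤ maxC n x - x i :=
    Int.le_of_dvd (by have := le_maxC x i; omega) (hi₀ ▸ hx.2 i₀ i)
  exact Or.inr (Or.inr ⟨by omega, by omega⟩)

lemma isEdge.eq_minC_or_eq {e : Fin (n+1) → ℤ} (he : isEdge n e) (i : Fin (n+1)) :
    e i = minC n e ∨ e i = minC n e + (n + 1) := by
  obtain ⟨j, hj⟩ := exists_eq_minC e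
  have hlo := minC_le e i
  have hhi := le_maxC e i
  have hspan := he.2
  rcases (show e i - e j ≤ n + 1 by omega).lt_or_eq with hlt | heq
  · exact Or.inl (by linarith [Int.eq_zero_of_dvd_of_nonneg_of_lt (by omega) hlt (he.1.2 i j)])
  · exact Or.inr (by omega)

lemma isEdge_of_forall_eq_or_eq {e : Fin (n+1) → ℤ} (he : inV n e) {c : ℤ}
    (hval : ∀ i, e i = c ∨ e i = c + (n + 1)) {i j : Fin (n+1)} (hi : e i = c)
    (hj : e j = c + (n + 1)) : isEdge n e := by
  have hmax : maxC n e = c + (n + 1) :=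
    maxC_eq_of_forall_le (fun k => by rcases hval k with h | h <;> omega) j hj
  have hmin : minC n e = c :=
    minC_eq_of_forall_le (fun k => by rcases hval k with h | h <;> omega) i hi
  exact ⟨he, by rw [hmax, hmin]; ring⟩

/-- Since `e` takes only the values `c` and `c + (n + 1)`, always `e i - e j ≥ -(n + 1)`; the
hypothesis on the spread forces equality. -/
lemma isEdge.eq_of_spread_add_le {e x : Fin (n+1) → ℤ} (he : isEdge n e)
    (hspread : spread n (x + e) + (n + 1) ≤ spread n x) {i j : Fin (n+1)}
    (hi : x i = maxC n x) (hj : x j = minC n x) :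
    e i = minC n e ∧ e j = minC n e + (n + 1) := by
  have hij : (x + e) i - (x + e) j ≤ spread n (x + e) := by
    have := le_maxC (x + e) i
    have := minC_le (x + e) j
    unfold spread
    omega
  simp only [Pi.add_apply, spread, hi, hj] at hij hspread
  rcases he.eq_minC_or_eq i with h | h <;> rcases he.eq_minC_or_eq j with h' | h' <;> omega

/-- `{i | x i ≠ maxC n x}` consists of the minimal and the intermediate coordinates, so these climb
one rung and the minimal ones a second. -/
def towardOrigin (n : ℕ) (x : Fin (n+1) → ℤ) : Fin (n+1) → ℤ :=
  x + eVec n {i | x i = minC n x} + eVec n {i | x i ≠ maxC n x}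

lemma exists_towardOrigin_eq {x : Fin (n+1) → ℤ} (hlt : minC n x < maxC n x) : ∃ s : ℤ,
    (∀ i, x i = maxC n x → towardOrigin n x i = x i + s) ∧
    (∀ i, x i = minC n x → towardOrigin n x i = x i + 2 * (n + 1) + s) ∧
    (∀ i, x i ≠ maxC n x → x i ≠ minC n x → towardOrigin n x i = x i + (n + 1) + s) := by
  refine ⟨-#{i | x i = minC n x} - #{i | x i ≠ maxC n x}, ?_, ?_, ?_⟩ <;> intro i
  · intro hmax
    simp [towardOrigin, eVec_apply, hmax, hlt.ne']
    ring
  · intro hmin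
    simp [towardOrigin, eVec_apply, hmin, hlt.ne]
    ring
  · intro hmax hmin
    simp [towardOrigin, eVec_apply, hmax, hmin]
    ring

lemma inV_towardOrigin {x : Fin (n+1) → ℤ} (hx : inV n x) : inV n (towardOrigin n x) :=
  inV_add (inV_add hx (inV_eVec _)) (inV_eVec _)

lemma spread_towardOrigin {x : Fin (n+1) → ℤ} (hx : inV n x)
    (hspread : 2 * (n + 1) ≤ spread n x) :
    spread n (towardOrigin n x) = spread n x - 2 * (n + 1) := by
  have hN : (0 : ℤ) < n + 1 := by positivity
  obtain ⟨s, hmax, hmin, hmid⟩ :=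
    exists_towardOrigin_eq (x := x) (by unfold spread at hspread; omega)
  obtain ⟨i₀, hi₀⟩ := exists_eq_maxC x
  obtain ⟨j₀, hj₀⟩ := exists_eq_minC x
  unfold spread at hspread ⊢
  have hle : ∀ i, towardOrigin n x i ≤ maxC n x + s := fun i => by
    rcases hx.eq_maxC_or_eq_minC_or_between i with h | h | h
    · rw [hmax i h, h]
    · rw [hmin i h, h]; omega
    · rw [hmid i (by omega) (by omega)]; omega
  have hge : ∀ i, minC n x + 2 * (n + 1) + s ≤ towardOrigin n x i := fun i => by
    rcases hx.eq_maxC_or_eq_minC_or_between i with h | h | h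
    · rw [hmax i h, h]; omega
    · rw [hmin i h, h]
    · rw [hmid i (by omega) (by omega)]; omega
  rw [maxC_eq_of_forall_le hle i₀ (by rw [hmax i₀ hi₀, hi₀]),
    minC_eq_of_forall_le hge j₀ (by rw [hmin j₀ hj₀, hj₀])]
  ring

lemma isEdge_towardOrigin_sub {x y : Fin (n+1) → ℤ} (hx : inV n x) (hy : inV n y)
    (hxy : isEdge n (y - x)) (hspread : spread n y + (n + 1) ≤ spread n x) :
    isEdge n (towardOrigin n x - y) := by
  have hN : (0 : ℤ) < n + 1 := by positivity
  have hlt : minC n x < maxC n x := by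
    have := spread_nonneg y
    unfold spread at hspread this
    omega
  obtain ⟨s, hmax, hmin, hmid⟩ := exists_towardOrigin_eq hlt
  obtain ⟨i₀, hi₀⟩ := exists_eq_maxC x
  obtain ⟨j₀, hj₀⟩ := exists_eq_minC x
  rw [← add_sub_cancel x y] at hspread
  have hdrop := fun i j => hxy.eq_of_spread_add_le hspread (i := i) (j := j)
  set c := minC n (y - x)
  have hsub : ∀ i, (towardOrigin n x - y) i = towardOrigin n x i - x i - (y - x) i := fun i => by
    simp only [Pi.sub_apply]; ring
  refine isEdge_of_forall_eq_or_eq (c := s - c) (inV_sub (inV_towardOrigin hx) hy) (fun i => ?_)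
    (i := i₀) (j := j₀) ?_ ?_
  · rw [hsub]
    rcases hx.eq_maxC_or_eq_minC_or_between i with h | h | h
    · have := (hdrop i j₀ h hj₀).1; rw [hmax i h]; omega
    · have := (hdrop i₀ i hi₀ h).2; rw [hmin i h]; omega
    · rw [hmid i (by omega) (by omega)]
      rcases hxy.eq_minC_or_eq i with h' | h' <;> omega
  · have := (hdrop i₀ j₀ hi₀ hj₀).1; rw [hsub, hmax i₀ hi₀]; omega
  · have := (hdrop i₀ j₀ hi₀ hj₀).2; rw [hsub, hmin j₀ hj₀]; omega

end Quadrangle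

theorem stmt9_general (n : ℕ) (m : ℕ) (hm : 1 ≤ m)
    (X Y Z : Fin (n+1) → ℤ) (hX : inV n X) (hY : inV n Y) (hZ : inV n Z)
    (hXY : isEdge n (Y - X)) (hXZ : isEdge n (Z - X))
    (hhX : height n X = (m : ℤ) + 1)
    (hhY : height n Y = (m : ℤ)) (hhZ : height n Z = (m : ℤ)) :
    ∃ W : Fin (n+1) → ℤ, inV n W ∧ isEdge n (W - Y) ∧ isEdge n (W - Z) ∧
      height n W = (m : ℤ) - 1 := by
  have hsX : spread n X = (m + 1) * (n + 1) := hhX ▸ spread_eq_height_mul hX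
  have hsY : spread n Y = m * (n + 1) := hhY ▸ spread_eq_height_mul hY
  have hsZ : spread n Z = m * (n + 1) := hhZ ▸ spread_eq_height_mul hZ
  have hm' : (1 : ℤ) ≤ m := by exact_mod_cast hm
  refine ⟨towardOrigin n X, inV_towardOrigin hX,
    isEdge_towardOrigin_sub hX hY hXY (by rw [hsX, hsY]; linarith),
    isEdge_towardOrigin_sub hX hZ hXZ (by rw [hsX, hsZ]; linarith),
    height_eq_of_spread_eq ?_⟩
  rw [spread_towardOrigin hX (by rw [hsX]; nlinarith), hsX]
  ring

/-- quadrangle condition at the origin. -/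
theorem stmt9 (n : ℕ) (hn : 1 ≤ n) (m : ℕ) (hm : 1 ≤ m)
    (X Y Z : Fin (n+1) → ℤ) (hX : inV n X) (hY : inV n Y) (hZ : inV n Z)
    (hXY : isEdge n (Y - X)) (hXZ : isEdge n (Z - X))
    (hhX : height n X = (m : ℤ) + 1)
    (hhY : height n Y = (m : ℤ)) (hhZ : height n Z = (m : ℤ)) :
    ∃ W : Fin (n+1) → ℤ, inV n W ∧ isEdge n (W - Y) ∧ isEdge n (W - Z) ∧
      height n W = (m : ℤ) - 1 :=
  stmt9_general n m hm X Y Z hX hY hZ hXY hXZ hhX hhY hhZ
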